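/- Any two rooted triples on three leaves whose leaf sets share fewer than two elements cannot entail any rooted triple not already displayed by a tree displaying each separately; equivalently, inference rules based on two triples r1, r2 can yield new triples only if |L_{r1} ∩ L_{r2}| = 2. -/

import Mathlib

namespace Phylo

/-- Rooted trees with leaves labeled by `L`. -/
inductive T (L : Type) where
  | leaf (x : L) : T L
  | node (ts : List (T L)) : T L

/-- `Subtree s t`: `s` is the subtree of `t` rooted at some vertex of `t`. -/
inductive Subtree {L : Type} : T L → T L → Prop where
  | refl (t : T L) : Subtree t t
  | child {s u : T L} {ts : List (T L)} : s ∈ ts → Subtree u s → Subtree u (T.node ts)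

/-- The list of leaf labels of a tree. -/
def leafList {L : Type} : T L → List L
  | T.leaf x => [x]
  | T.node ts => (ts.attach.map (fun s => leafList s.1)).flatten
decreasing_by all_goals (simp_wf; have := List.sizeOf_lt_of_mem s.2; omega)

/-- A phylogenetic tree: every inner vertex has at least two children. -/
inductive IsPhylo {L : Type} : T L → Prop where
  | leaf (x : L) : IsPhylo (T.leaf x)
  | node {ts : List (T L)} : 2 ≤ ts.length → (∀ t ∈ ts, IsPhylo t) → IsPhylo (T.node ts)

/-- A phylogenetic tree with pairwise distinct leaf labels. -/
def PhyloTree {L : Type} (t : T L) : Prop := IsPhylo t ∧ (leafList t).Nodup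

/-- A binary tree: every inner vertex has exactly two children. -/
inductive BinaryT {L : Type} : T L → Prop where
  | leaf (x : L) : BinaryT (T.leaf x)
  | node {ts : List (T L)} : ts.length = 2 → (∀ t ∈ ts, BinaryT t) → BinaryT (T.node ts)

def numVertices {L : Type} : T L → ℕ
  | T.leaf _ => 1
  | T.node ts => 1 + (ts.attach.map (fun s => numVertices s.1)).sum
decreasing_by all_goals (simp_wf; have := List.sizeOf_lt_of_mem s.2; omega)

def numLeaves {L : Type} : T L → ℕ
  | T.leaf _ => 1
  | T.node ts => (ts.attach.map (fun s => numLeaves s.1)).sum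
decreasing_by all_goals (simp_wf; have := List.sizeOf_lt_of_mem s.2; omega)

def numInner {L : Type} : T L → ℕ
  | T.leaf _ => 0
  | T.node ts => 1 + (ts.attach.map (fun s => numInner s.1)).sum
decreasing_by all_goals (simp_wf; have := List.sizeOf_lt_of_mem s.2; omega)

/-- `C` is a cluster of `t`: the set of leaves below some vertex of `t`. -/
def IsCluster {L : Type} (t : T L) (C : Set L) : Prop :=
  ∃ s, Subtree s t ∧ ∀ x, x ∈ leafList s ↔ x ∈ C

def clusterSet {L : Type} (t : T L) : Set (Set L) := {C | IsCluster t C}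

/-- The tree `t` displays the rooted triple `(ab|c)`. -/
def Displays {L : Type} (t : T L) (a b c : L) : Prop :=
  a ≠ b ∧ a ≠ c ∧ b ≠ c ∧ a ∈ leafList t ∧ b ∈ leafList t ∧ c ∈ leafList t ∧
    ∃ s, Subtree s t ∧ a ∈ leafList s ∧ b ∈ leafList s ∧ c ∉ leafList s

/-- A rooted triple `(ab|c)`. -/
structure Trip (L : Type) where
  a : L
  b : L
  c : L

def Trip.proper {L : Type} (r : Trip L) : Prop := r.a ≠ r.b ∧ r.a ≠ r.c ∧ r.b ≠ r.c

def DisplaysT {L : Type} (t : T L) (r : Trip L) : Prop := Displays t r.a r.b r.c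

def DisplaysAll {L : Type} (t : T L) (R : Set (Trip L)) : Prop := ∀ r ∈ R, DisplaysT t r

def tripLeaves {L : Type} (r : Trip L) : Set L := {r.a, r.b, r.c}

/-- The leaf set `L_R` of a triple set. -/
def leafSetR {L : Type} (R : Set (Trip L)) : Set L := ⋃ r ∈ R, tripLeaves r

/-- `t` is a phylogenetic tree on the leaf set `L_R` displaying all triples of `R`. -/
def IsTreeFor {L : Type} (t : T L) (R : Set (Trip L)) : Prop :=
  PhyloTree t ∧ (∀ x, x ∈ leafList t ↔ x ∈ leafSetR R) ∧ DisplaysAll t R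

/-- `R` is consistent: some phylogenetic tree on `L_R` displays all triples of `R`. -/
def Consistent {L : Type} (R : Set (Trip L)) : Prop := ∃ t, IsTreeFor t R

/-- `R` is consistent relative to the leaf set `S`. -/
def ConsistentOn {L : Type} (R : Set (Trip L)) (S : Set L) : Prop :=
  ∃ t : T L, PhyloTree t ∧ (∀ x, x ∈ leafList t ↔ x ∈ S) ∧ DisplaysAll t R

/-- The closure of `R`: all triples displayed by every phylogenetic tree on `L_R`
displaying `R`. -/
def cl {L : Type} (R : Set (Trip L)) : Set (Trip L) :=
  {r | ∀ t : T L, IsTreeFor t R → DisplaysT t r}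

/-- Membership of the (unordered) rooted triple `(xy|z)` in `R`. -/
def MemS {L : Type} (R : Set (Trip L)) (x y z : L) : Prop :=
  Trip.mk x y z ∈ R ∨ Trip.mk y x z ∈ R

/-- All triples of `R` have pairwise distinct leaves taken from `S`. -/
def ProperOn {L : Type} (R : Set (Trip L)) (S : Set L) : Prop :=
  ∀ r ∈ R, r.a ∈ S ∧ r.b ∈ S ∧ r.c ∈ S ∧ r.proper

/-- `R` is dense on `S`: each 3-element subset of `S` carries at least one triple of `R`. -/
def DenseOn {L : Type} (R : Set (Trip L)) (S : Set L) : Prop :=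
  ProperOn R S ∧ ∀ x y z : L, x ∈ S → y ∈ S → z ∈ S → x ≠ y → x ≠ z → y ≠ z →
    (MemS R x y z ∨ MemS R x z y ∨ MemS R y z x)

/-- `R` is strictly dense on `S`: each 3-element subset of `S` carries exactly one
of the three possible rooted triples. -/
def StrictlyDense {L : Type} (R : Set (Trip L)) (S : Set L) : Prop :=
  ProperOn R S ∧ ∀ x y z : L, x ∈ S → y ∈ S → z ∈ S → x ≠ y → x ≠ z → y ≠ z →
    ((MemS R x y z ∧ ¬ MemS R x z y ∧ ¬ MemS R y z x) ∨
     (¬ MemS R x y z ∧ MemS R x z y ∧ ¬ MemS R y z x) ∨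
     (¬ MemS R x y z ∧ ¬ MemS R x z y ∧ MemS R y z x))

/-- The Aho graph `[R, S]`: vertices `S`, edges `{x,y}` for triples `(xy|z) ∈ R`
with `x,y,z ∈ S`. -/
def ahoGraph {L : Type} (R : Set (Trip L)) (S : Set L) : SimpleGraph S where
  Adj x y := x ≠ y ∧ ∃ r ∈ R, (r.c ∈ S) ∧
      ((r.a = (x : L) ∧ r.b = (y : L)) ∨ (r.a = (y : L) ∧ r.b = (x : L)))
  symm := ⟨by
    rintro x y ⟨hxy, r, hr, hc, h⟩
    exact ⟨hxy.symm, r, hr, hc, h.symm⟩⟩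
  loopless := ⟨by rintro x ⟨h, -⟩; exact h rfl⟩


end Phylo
namespace Phylo
variable {A B : Type}

theorem leafList_node (ts : List (T A)) :
    leafList (T.node ts) = (ts.map leafList).flatten := by
  rw [leafList]; congr 1; simp [List.attach_map_val]

theorem subtree_leaf_iff {s : T A} {x : A} : Subtree s (T.leaf x) ↔ s = T.leaf x := by
  constructor
  · intro h; cases h with
    | refl => rfl
  · rintro rfl; exact Subtree.refl _

theorem subtree_node_iff {s : T A} {ts : List (T A)} :
    Subtree s (T.node ts) ↔ s = T.node ts ∨ ∃ u ∈ ts, Subtree s u := by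
  constructor
  · intro h; cases h with
    | refl => exact Or.inl rfl
    | child hmem hsub => exact Or.inr ⟨_, hmem, hsub⟩
  · rintro (rfl | ⟨u, hmem, hsub⟩)
    · exact Subtree.refl _
    · exact Subtree.child hmem hsub

mutual
def leafListC : T A → List A
  | T.leaf x => [x]
  | T.node ts => leafListCs ts
def leafListCs : List (T A) → List A
  | [] => []
  | t :: ts => leafListC t ++ leafListCs ts
end

mutual
def subtreesC : T A → List (T A)
  | T.leaf x => [T.leaf x]
  | T.node ts => T.node ts :: subtreesCs ts
def subtreesCs : List (T A) → List (T A)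
  | [] => []
  | t :: ts => subtreesC t ++ subtreesCs ts
end

mutual
def isPhyloC : T A → Bool
  | T.leaf _ => true
  | T.node ts => decide (2 ≤ ts.length) && allPhyloC ts
def allPhyloC : List (T A) → Bool
  | [] => true
  | t :: ts => isPhyloC t && allPhyloC ts
end

theorem isPhylo_node_iff {ts : List (T A)} :
    IsPhylo (T.node ts) ↔ 2 ≤ ts.length ∧ ∀ t ∈ ts, IsPhylo t := by
  constructor
  · intro h; cases h with
    | node hlen hall => exact ⟨hlen, hall⟩
  · rintro ⟨hlen, hall⟩; exact IsPhylo.node hlen hall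

mutual
theorem leafListC_eq : ∀ t : T A, leafListC t = leafList t
  | T.leaf x => by rw [leafListC, leafList]
  | T.node ts => by rw [leafListC, leafList_node, leafListCs_eq]
theorem leafListCs_eq : ∀ ts : List (T A), leafListCs ts = (ts.map leafList).flatten
  | [] => rfl
  | t :: ts => by rw [leafListCs, leafListC_eq, leafListCs_eq]; simp
end

mutual
theorem subtreesC_iff : ∀ t s : T A, Subtree s t ↔ s ∈ subtreesC t
  | T.leaf x, s => by
    rw [subtree_leaf_iff, subtreesC]; simp
  | T.node ts, s => by
    rw [subtree_node_iff, subtreesC, List.mem_cons, subtreesCs_iff ts s]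
theorem subtreesCs_iff : ∀ (ts : List (T A)) (s : T A),
    (∃ u ∈ ts, Subtree s u) ↔ s ∈ subtreesCs ts
  | [], s => by simp [subtreesCs]
  | t :: ts, s => by
    rw [subtreesCs, List.mem_append, ← subtreesC_iff t s, ← subtreesCs_iff ts s]
    simp
end

mutual
theorem isPhyloC_iff : ∀ t : T A, IsPhylo t ↔ isPhyloC t = true
  | T.leaf x => by rw [isPhyloC]; simp; exact IsPhylo.leaf x
  | T.node ts => by
    rw [isPhylo_node_iff, isPhyloC, Bool.and_eq_true, decide_eq_true_eq, allPhyloC_iff ts]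
theorem allPhyloC_iff : ∀ ts : List (T A), (∀ t ∈ ts, IsPhylo t) ↔ allPhyloC ts = true
  | [] => by simp [allPhyloC]
  | t :: ts => by
    rw [allPhyloC, Bool.and_eq_true, ← isPhyloC_iff t, ← allPhyloC_iff ts]
    simp
end

instance decIsPhylo (t : T A) : Decidable (IsPhylo t) :=
  decidable_of_iff _ (isPhyloC_iff t).symm

instance decMemLeafList [DecidableEq A] (x : A) (t : T A) : Decidable (x ∈ leafList t) :=
  decidable_of_iff (x ∈ leafListC t) (by rw [leafListC_eq])

instance decNodupLeafList [DecidableEq A] (t : T A) : Decidable ((leafList t).Nodup) :=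
  decidable_of_iff ((leafListC t).Nodup) (by rw [leafListC_eq])

instance decDisplays [DecidableEq A] (t : T A) (x y z : A) : Decidable (Displays t x y z) :=
  decidable_of_iff (x ≠ y ∧ x ≠ z ∧ y ≠ z ∧ x ∈ leafListC t ∧ y ∈ leafListC t ∧ z ∈ leafListC t ∧
      ∃ s ∈ subtreesC t, x ∈ leafListC s ∧ y ∈ leafListC s ∧ z ∉ leafListC s) (by
    simp only [leafListC_eq]
    unfold Displays
    constructor
    · rintro ⟨h1,h2,h3,h4,h5,h6,s,hs,h7⟩
      exact ⟨h1,h2,h3,h4,h5,h6,s,(subtreesC_iff t s).mpr hs,h7⟩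
    · rintro ⟨h1,h2,h3,h4,h5,h6,s,hs,h7⟩
      exact ⟨h1,h2,h3,h4,h5,h6,s,(subtreesC_iff t s).mp hs,h7⟩)

def mapT (f : A → B) : T A → T B
  | T.leaf x => T.leaf (f x)
  | T.node ts => T.node (ts.attach.map (fun s => mapT f s.1))
decreasing_by all_goals (simp_wf; have := List.sizeOf_lt_of_mem s.2; omega)

theorem mapT_node (f : A → B) (ts : List (T A)) :
    mapT f (T.node ts) = T.node (ts.map (mapT f)) := by
  rw [mapT]; congr 1; simp [List.attach_map_val]

theorem leafList_mapT (f : A → B) : ∀ t : T A, leafList (mapT f t) = (leafList t).map f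
  | T.leaf x => by simp [mapT, leafList]
  | T.node ts => by
    rw [mapT_node, leafList_node, leafList_node, List.map_map, List.map_flatten, List.map_map]
    congr 1
    apply List.map_congr_left
    intro u hu1
    exact leafList_mapT f u
termination_by t => sizeOf t
decreasing_by all_goals (simp_wf; have := List.sizeOf_lt_of_mem hu1; omega)

theorem isPhylo_mapT (f : A → B) : ∀ t : T A, IsPhylo t → IsPhylo (mapT f t)
  | T.leaf x, _ => by simpa [mapT] using IsPhylo.leaf (f x)
  | T.node ts, h => by
    rw [mapT_node]
    rw [isPhylo_node_iff] at h ⊢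
    obtain ⟨hlen, hall⟩ := h
    refine ⟨by simpa using hlen, ?_⟩
    rintro u hu
    rw [List.mem_map] at hu
    obtain ⟨v, hv1, rfl⟩ := hu
    exact isPhylo_mapT f v (hall v hv1)
termination_by t => sizeOf t
decreasing_by all_goals (simp_wf; have := List.sizeOf_lt_of_mem hv1; omega)

theorem subtree_mapT (f : A → B) : ∀ (t : T A) (s : T B), Subtree s (mapT f t) ↔
    ∃ s' : T A, Subtree s' t ∧ s = mapT f s'
  | T.leaf x, s => by
    rw [show mapT f (T.leaf x) = T.leaf (f x) from by simp [mapT], subtree_leaf_iff]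
    constructor
    · rintro rfl; exact ⟨T.leaf x, Subtree.refl _, by simp [mapT]⟩
    · rintro ⟨s', hs', rfl⟩
      rw [subtree_leaf_iff] at hs'; subst hs'; simp [mapT]
  | T.node ts, s => by
    rw [mapT_node, subtree_node_iff]
    constructor
    · rintro (rfl | ⟨u, hu, hsub⟩)
      · exact ⟨T.node ts, Subtree.refl _, (mapT_node f ts).symm⟩
      · rw [List.mem_map] at hu
        obtain ⟨v, hv1, rfl⟩ := hu
        obtain ⟨s', hs', rfl⟩ := (subtree_mapT f v s).mp hsub
        exact ⟨s', Subtree.child hv1 hs', rfl⟩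
    · rintro ⟨s', hs', rfl⟩
      rw [subtree_node_iff] at hs'
      rcases hs' with rfl | ⟨u, hu2, hsub⟩
      · exact Or.inl (mapT_node f ts)
      · refine Or.inr ⟨mapT f u, List.mem_map_of_mem (f := mapT f) hu2, ?_⟩
        exact (subtree_mapT f u (mapT f s')).mpr ⟨s', hsub, rfl⟩
termination_by t s => sizeOf t
decreasing_by all_goals (simp_wf; first
  | (have := List.sizeOf_lt_of_mem hv1; omega)
  | (have := List.sizeOf_lt_of_mem hu2; omega))


theorem displays_symm {t : T A} {x y z : A} (h : Displays t x y z) : Displays t y x z := by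
  obtain ⟨h1,h2,h3,h4,h5,h6,u,hu,ha,hb,hc⟩ := h
  exact ⟨h1.symm, h3, h2, h5, h4, h6, u, hu, hb, ha, hc⟩

theorem displays_mapT {f : A → B} (hf : Function.Injective f) (t : T A) (x y z : A) :
    Displays (mapT f t) (f x) (f y) (f z) ↔ Displays t x y z := by
  unfold Displays
  simp only [leafList_mapT, List.mem_map_of_injective hf, hf.ne_iff]
  constructor
  · rintro ⟨h1,h2,h3,h4,h5,h6,u,hu,ha,hb,hc⟩
    obtain ⟨s', hs', rfl⟩ := (subtree_mapT f t u).mp hu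
    rw [leafList_mapT, List.mem_map_of_injective hf] at ha hb hc
    exact ⟨h1,h2,h3,h4,h5,h6,s',hs',ha,hb,hc⟩
  · rintro ⟨h1,h2,h3,h4,h5,h6,u,hu,ha,hb,hc⟩
    refine ⟨h1,h2,h3,h4,h5,h6,mapT f u,(subtree_mapT f t _).mpr ⟨u,hu,rfl⟩,?_,?_,?_⟩ <;>
      rw [leafList_mapT, List.mem_map_of_injective hf] <;> assumption

theorem displays_mapT_inv {f : A → B} (hf : Function.Injective f) {t : T A} {x y z : B}
    (h : Displays (mapT f t) x y z) :
    ∃ x' y' z', x = f x' ∧ y = f y' ∧ z = f z' ∧ Displays t x' y' z' := by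
  obtain ⟨h1,h2,h3,h4,h5,h6,rest⟩ := h
  rw [leafList_mapT, List.mem_map] at h4 h5 h6
  obtain ⟨x', hx', rfl⟩ := h4
  obtain ⟨y', hy', rfl⟩ := h5
  obtain ⟨z', hz', rfl⟩ := h6
  refine ⟨x', y', z', rfl, rfl, rfl, ?_⟩
  rw [← displays_mapT hf]
  exact ⟨h1,h2,h3,by
    rw [leafList_mapT]; exact List.mem_map_of_mem (f := f) hx', by
    rw [leafList_mapT]; exact List.mem_map_of_mem (f := f) hy', by
    rw [leafList_mapT]; exact List.mem_map_of_mem (f := f) hz', rest⟩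

def mapTrip (f : A → B) (r : Trip A) : Trip B := ⟨f r.a, f r.b, f r.c⟩

/-- Decidable version of `IsTreeFor t {p, q}` over a finite label type. -/
def TreeForPair (t : T A) (p q : Trip A) : Prop :=
  IsPhylo t ∧ (leafList t).Nodup ∧
  (∀ x : A, x ∈ leafList t ↔ (x = p.a ∨ x = p.b ∨ x = p.c ∨ x = q.a ∨ x = q.b ∨ x = q.c)) ∧
  Displays t p.a p.b p.c ∧ Displays t q.a q.b q.c

/-- Decidable version of `IsTreeFor t {p}`. -/
def TreeForSingle (t : T A) (p : Trip A) : Prop :=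
  IsPhylo t ∧ (leafList t).Nodup ∧
  (∀ x : A, x ∈ leafList t ↔ (x = p.a ∨ x = p.b ∨ x = p.c)) ∧
  Displays t p.a p.b p.c

instance [DecidableEq A] [Fintype A] (t : T A) (p q : Trip A) : Decidable (TreeForPair t p q) := by
  unfold TreeForPair; infer_instance

instance [DecidableEq A] [Fintype A] (t : T A) (p : Trip A) : Decidable (TreeForSingle t p) := by
  unfold TreeForSingle; infer_instance

theorem mem_leafSetR_pair {P Q : Trip A} {x : A} :
    x ∈ leafSetR {P, Q} ↔ (x = P.a ∨ x = P.b ∨ x = P.c ∨ x = Q.a ∨ x = Q.b ∨ x = Q.c) := by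
  simp [leafSetR, tripLeaves]
  tauto

theorem mem_leafSetR_single {P : Trip A} {x : A} :
    x ∈ leafSetR {P} ↔ (x = P.a ∨ x = P.b ∨ x = P.c) := by
  simp [leafSetR, tripLeaves]

theorem isTreeFor_map_pair {f : A → B} (hf : Function.Injective f) {t : T A} {p q : Trip A}
    (h : TreeForPair t p q) : IsTreeFor (mapT f t) {mapTrip f p, mapTrip f q} := by
  obtain ⟨hphy, hnd, hleaf, hp, hq⟩ := h
  refine ⟨⟨isPhylo_mapT f t hphy, by rw [leafList_mapT]; exact hnd.map hf⟩, ?_, ?_⟩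
  · intro x
    rw [mem_leafSetR_pair, leafList_mapT, List.mem_map]
    constructor
    · rintro ⟨i, hi, rfl⟩
      rcases (hleaf i).mp hi with h|h|h|h|h|h <;> subst h <;> simp [mapTrip] <;> tauto
    · intro hx
      rcases hx with h|h|h|h|h|h <;> subst h <;>
        [exact ⟨p.a, (hleaf _).mpr (by tauto), rfl⟩;
         exact ⟨p.b, (hleaf _).mpr (by tauto), rfl⟩;
         exact ⟨p.c, (hleaf _).mpr (by tauto), rfl⟩;
         exact ⟨q.a, (hleaf _).mpr (by tauto), rfl⟩;
         exact ⟨q.b, (hleaf _).mpr (by tauto), rfl⟩;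
         exact ⟨q.c, (hleaf _).mpr (by tauto), rfl⟩]
  · rintro r (rfl | rfl)
    · exact (displays_mapT hf t p.a p.b p.c).mpr hp
    · exact (displays_mapT hf t q.a q.b q.c).mpr hq

theorem isTreeFor_map_single {f : A → B} (hf : Function.Injective f) {t : T A} {p : Trip A}
    (h : TreeForSingle t p) : IsTreeFor (mapT f t) {mapTrip f p} := by
  obtain ⟨hphy, hnd, hleaf, hp⟩ := h
  refine ⟨⟨isPhylo_mapT f t hphy, by rw [leafList_mapT]; exact hnd.map hf⟩, ?_, ?_⟩
  · intro x
    rw [mem_leafSetR_single, leafList_mapT, List.mem_map]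
    constructor
    · rintro ⟨i, hi, rfl⟩
      rcases (hleaf i).mp hi with h|h|h <;> subst h <;> simp [mapTrip] <;> tauto
    · intro hx
      rcases hx with h|h|h <;> subst h <;>
        [exact ⟨p.a, (hleaf _).mpr (by tauto), rfl⟩;
         exact ⟨p.b, (hleaf _).mpr (by tauto), rfl⟩;
         exact ⟨p.c, (hleaf _).mpr (by tauto), rfl⟩]
  · rintro r rfl
    exact (displays_mapT hf t p.a p.b p.c).mpr hp


theorem swap_mem_cl {R : Set (Trip A)} {r : Trip A} (hr : r ∈ R) :
    (⟨r.b, r.a, r.c⟩ : Trip A) ∈ cl R := by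
  intro t ht
  exact displays_symm (ht.2.2 r hr)

theorem self_mem_cl {R : Set (Trip A)} {r : Trip A} (hr : r ∈ R) : r ∈ cl R :=
  fun _ ht => ht.2.2 r hr

def Matches (p q : Trip A) (x y z : A) : Prop :=
  (x = p.a ∧ y = p.b ∧ z = p.c) ∨ (x = p.b ∧ y = p.a ∧ z = p.c) ∨
  (x = q.a ∧ y = q.b ∧ z = q.c) ∨ (x = q.b ∧ y = q.a ∧ z = q.c)

def MatchesS (p : Trip A) (x y z : A) : Prop :=
  (x = p.a ∧ y = p.b ∧ z = p.c) ∨ (x = p.b ∧ y = p.a ∧ z = p.c)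

def single (p : Trip A) : T A := T.node [T.node [T.leaf p.a, T.leaf p.b], T.leaf p.c]

def CertOK {n : ℕ} (p q : Trip (Fin n)) (fam : List (T (Fin n))) : Prop :=
  (∀ t ∈ fam, TreeForPair t p q) ∧
  (∀ x y z : Fin n, (∀ t ∈ fam, Displays t x y z) → Matches p q x y z) ∧
  TreeForSingle (single p) p ∧ TreeForSingle (single q) q ∧
  (∀ x y z : Fin n, Displays (single p) x y z → MatchesS p x y z) ∧
  (∀ x y z : Fin n, Displays (single q) x y z → MatchesS q x y z)

instance {n : ℕ} (p q : Trip (Fin n)) (x y z : Fin n) : Decidable (Matches p q x y z) := by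
  unfold Matches; infer_instance
instance {n : ℕ} (p : Trip (Fin n)) (x y z : Fin n) : Decidable (MatchesS p x y z) := by
  unfold MatchesS; infer_instance
instance {n : ℕ} (p q : Trip (Fin n)) (fam : List (T (Fin n))) : Decidable (CertOK p q fam) := by
  unfold CertOK; infer_instance

def lf {n : ℕ} (i : Fin n) : T (Fin n) := T.leaf i
def nd {n : ℕ} (l : List (T (Fin n))) : T (Fin n) := T.node l
def ch {n : ℕ} (i j : Fin n) : T (Fin n) := nd [lf i, lf j]

def famD : List (T (Fin 6)) :=
  [ nd [nd [ch 0 1, lf 2], nd [ch 3 4, lf 5]],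
    nd [nd [ch 3 4, lf 5], ch 0 1, lf 2],
    nd [nd [ch 0 1, lf 2], ch 3 4, lf 5],
    nd [nd [lf 0, lf 1, ch 3 4, lf 5], lf 2],
    nd [nd [lf 3, lf 4, ch 0 1, lf 2], lf 5] ]

def famI : List (T (Fin 5)) :=
  [ nd [ch 0 1, ch 3 4, lf 2],
    nd [nd [lf 0, lf 1, ch 3 4], lf 2],
    nd [nd [lf 3, lf 4, ch 0 1], lf 2] ]

def famII : List (T (Fin 5)) :=
  [ nd [ch 0 1, ch 2 3, lf 4],
    nd [nd [lf 0, lf 1, lf 4], ch 2 3],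
    nd [nd [nd [lf 0, lf 1, lf 3], lf 2], lf 4],
    nd [nd [ch 0 1, lf 2, lf 3], lf 4] ]

def famIII : List (T (Fin 5)) :=
  [ nd [ch 3 4, ch 0 1, lf 2],
    nd [nd [lf 3, lf 4, lf 2], ch 0 1],
    nd [nd [nd [lf 3, lf 4, lf 1], lf 0], lf 2],
    nd [nd [ch 3 4, lf 0, lf 1], lf 2] ]

def famIV : List (T (Fin 5)) :=
  [ nd [nd [ch 0 1, lf 3], lf 2, lf 4],
    nd [nd [ch 0 3, lf 1], lf 2, lf 4],
    nd [nd [ch 0 3, lf 1, lf 4], lf 2],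
    nd [nd [ch 0 1, lf 3, lf 2], lf 4] ]

/-- The bridge lemma: everything combinatorial happens over `Fin n`. -/
theorem cl_pair_eq_of_cert {L : Type} {n : ℕ} (f : Fin n → L) (hf : Function.Injective f)
    (p q : Trip (Fin n)) (fam : List (T (Fin n))) (hne : fam ≠ [])
    (hcert : CertOK p q fam) :
    cl {mapTrip f p, mapTrip f q} = cl {mapTrip f p} ∪ cl {mapTrip f q} := by
  obtain ⟨t0, ts, rfl⟩ := List.exists_cons_of_ne_nil hne
  obtain ⟨htrees, hkill, ht1, ht2, h1char, h2char⟩ := hcert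
  apply Set.Subset.antisymm
  · -- hard direction
    intro r hr
    have hdisp : ∀ t ∈ t0 :: ts, DisplaysT (mapT f t) r := fun t ht =>
      hr (mapT f t) (isTreeFor_map_pair hf (htrees t ht))
    obtain ⟨x', y', z', hx, hy, hz, hd0⟩ :=
      displays_mapT_inv hf (hdisp t0 (List.mem_cons_self (a := t0) (l := ts)))
    have hall : ∀ t ∈ t0 :: ts, Displays t x' y' z' := by
      intro t ht
      have := hdisp t ht
      rw [DisplaysT, hx, hy, hz, displays_mapT hf] at this
      exact this
    have hr' : r = ⟨f x', f y', f z'⟩ := by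
      cases r; simp_all
    rcases hkill x' y' z' hall with ⟨ha,hb,hc⟩|⟨ha,hb,hc⟩|⟨ha,hb,hc⟩|⟨ha,hb,hc⟩ <;>
      subst ha <;> subst hb <;> subst hc <;> rw [hr']
    · exact Or.inl (self_mem_cl rfl)
    · exact Or.inl (swap_mem_cl (R := {mapTrip f p}) rfl)
    · exact Or.inr (self_mem_cl rfl)
    · exact Or.inr (swap_mem_cl (R := {mapTrip f q}) rfl)
  · rintro r (hr | hr)
    · have hd := hr (mapT f (single p)) (isTreeFor_map_single hf ht1)
      obtain ⟨x', y', z', hx, hy, hz, hd1⟩ := displays_mapT_inv hf hd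
      have hr' : r = ⟨f x', f y', f z'⟩ := by cases r; simp_all
      intro t ht
      have hp : DisplaysT t (mapTrip f p) := ht.2.2 _ (Or.inl rfl)
      rw [hr']
      rcases h1char x' y' z' hd1 with ⟨ha,hb,hc⟩|⟨ha,hb,hc⟩ <;>
        subst ha <;> subst hb <;> subst hc
      · exact hp
      · exact displays_symm hp
    · have hd := hr (mapT f (single q)) (isTreeFor_map_single hf ht2)
      obtain ⟨x', y', z', hx, hy, hz, hd1⟩ := displays_mapT_inv hf hd
      have hr' : r = ⟨f x', f y', f z'⟩ := by cases r; simp_all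
      intro t ht
      have hq : DisplaysT t (mapTrip f q) := ht.2.2 _ (Or.inr rfl)
      rw [hr']
      rcases h2char x' y' z' hd1 with ⟨ha,hb,hc⟩|⟨ha,hb,hc⟩ <;>
        subst ha <;> subst hb <;> subst hc
      · exact hq
      · exact displays_symm hq


def mk5 {L : Type} (a b c d e : L) : Fin 5 → L := fun i =>
  match i with
  | 0 => a | 1 => b | 2 => c | 3 => d | 4 => e

def mk6 {L : Type} (a b c d e f : L) : Fin 6 → L := fun i =>
  match i with
  | 0 => a | 1 => b | 2 => c | 3 => d | 4 => e | 5 => f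

theorem mk5_inj {L : Type} {a b c d e : L}
    (h1 : a ≠ b) (h2 : a ≠ c) (h3 : a ≠ d) (h4 : a ≠ e) (h5 : b ≠ c) (h6 : b ≠ d)
    (h7 : b ≠ e) (h8 : c ≠ d) (h9 : c ≠ e) (h10 : d ≠ e) :
    Function.Injective (mk5 a b c d e) := by
  intro i j hij
  fin_cases i <;> fin_cases j <;> simp_all [mk5]

theorem mk6_inj {L : Type} {a b c d e f : L}
    (h1 : a ≠ b) (h2 : a ≠ c) (h3 : a ≠ d) (h4 : a ≠ e) (h5 : a ≠ f) (h6 : b ≠ c)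
    (h7 : b ≠ d) (h8 : b ≠ e) (h9 : b ≠ f) (h10 : c ≠ d) (h11 : c ≠ e) (h12 : c ≠ f)
    (h13 : d ≠ e) (h14 : d ≠ f) (h15 : e ≠ f) :
    Function.Injective (mk6 a b c d e f) := by
  intro i j hij
  fin_cases i <;> fin_cases j <;> simp_all [mk6]

example {L : Type} (a b c d e : L) : mapTrip (mk5 a b c d e) ⟨1,0,2⟩ = ⟨b,a,c⟩ := rfl
example {L : Type} (a b c d e f : L) : mapTrip (mk6 a b c d e f) ⟨3,4,5⟩ = ⟨d,e,f⟩ := rfl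


end Phylo

open Phylo in
set_option maxHeartbeats 2000000 in
/-- If `r₁, r₂` are consistent rooted triples whose leaf sets share at most one
element, then `cl({r₁, r₂}) = cl({r₁}) ∪ cl({r₂})`: no new triple is entailed. -/
theorem closure_pair_of_small_overlap {L : Type} (r₁ r₂ : Trip L)
    (h₁ : r₁.proper) (h₂ : r₂.proper)
    (hcons : Consistent {r₁, r₂})
    (hshare : (tripLeaves r₁ ∩ tripLeaves r₂).ncard ≤ 1) :
    cl {r₁, r₂} = cl {r₁} ∪ cl {r₂} := by
  clear hcons
  obtain ⟨a, b, c⟩ := r₁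
  obtain ⟨d, e, f⟩ := r₂
  obtain ⟨hab, hac, hbc⟩ := h₁
  obtain ⟨hde, hdf, hef⟩ := h₂
  have hfin : (tripLeaves ⟨a,b,c⟩ ∩ tripLeaves ⟨d,e,f⟩ : Set L).Finite := by
    apply Set.Finite.inter_of_left
    exact ((Set.finite_singleton _).insert _).insert _
  have key : ∀ x y : L, (x = a ∨ x = b ∨ x = c) → (x = d ∨ x = e ∨ x = f) →
      (y = a ∨ y = b ∨ y = c) → (y = d ∨ y = e ∨ y = f) → x = y := by
    intro x y hx1 hx2 hy1 hy2
    by_contra hxy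
    have hlt : 1 < (tripLeaves ⟨a,b,c⟩ ∩ tripLeaves ⟨d,e,f⟩ : Set L).ncard := by
      rw [Set.one_lt_ncard_iff hfin]
      refine ⟨x, y, ?_, ?_, hxy⟩ <;> simp only [tripLeaves, Set.mem_inter_iff,
        Set.mem_insert_iff, Set.mem_singleton_iff]
      exacts [⟨hx1, hx2⟩, ⟨hy1, hy2⟩]
    omega
  by_cases hcf : c = f
  · -- c = f : family I
    subst hcf
    have had : a ≠ d := fun h => hac (key a c (Or.inl rfl) (Or.inl h) (Or.inr (Or.inr rfl)) (Or.inr (Or.inr rfl)))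
    have hae : a ≠ e := fun h => hac (key a c (Or.inl rfl) (Or.inr (Or.inl h)) (Or.inr (Or.inr rfl)) (Or.inr (Or.inr rfl)))
    have hbd : b ≠ d := fun h => hbc (key b c (Or.inr (Or.inl rfl)) (Or.inl h) (Or.inr (Or.inr rfl)) (Or.inr (Or.inr rfl)))
    have hbe : b ≠ e := fun h => hbc (key b c (Or.inr (Or.inl rfl)) (Or.inr (Or.inl h)) (Or.inr (Or.inr rfl)) (Or.inr (Or.inr rfl)))
    exact cl_pair_eq_of_cert (mk5 a b c d e) (mk5_inj hab hac had hae hbc hbd hbe hdf.symm hef.symm hde) ⟨0,1,2⟩ ⟨3,4,2⟩ famI (by simp [famI]) (by decide)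
  by_cases hcd : c = d
  · -- c = d : family II
    subst hcd
    have hae : a ≠ e := fun h => hac (key a c (Or.inl rfl) (Or.inr (Or.inl h)) (Or.inr (Or.inr rfl)) (Or.inl rfl))
    have haf : a ≠ f := fun h => hac (key a c (Or.inl rfl) (Or.inr (Or.inr h)) (Or.inr (Or.inr rfl)) (Or.inl rfl))
    have hbe : b ≠ e := fun h => hbc (key b c (Or.inr (Or.inl rfl)) (Or.inr (Or.inl h)) (Or.inr (Or.inr rfl)) (Or.inl rfl))
    have hbf : b ≠ f := fun h => hbc (key b c (Or.inr (Or.inl rfl)) (Or.inr (Or.inr h)) (Or.inr (Or.inr rfl)) (Or.inl rfl))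
    exact cl_pair_eq_of_cert (mk5 a b c e f) (mk5_inj hab hac hae haf hbc hbe hbf hde hdf hef) ⟨0,1,2⟩ ⟨2,3,4⟩ famII (by simp [famII]) (by decide)
  by_cases hce : c = e
  · -- c = e : family II (q swapped)
    subst hce
    have had : a ≠ d := fun h => hac (key a c (Or.inl rfl) (Or.inl h) (Or.inr (Or.inr rfl)) (Or.inr (Or.inl rfl)))
    have haf : a ≠ f := fun h => hac (key a c (Or.inl rfl) (Or.inr (Or.inr h)) (Or.inr (Or.inr rfl)) (Or.inr (Or.inl rfl)))
    have hbd : b ≠ d := fun h => hbc (key b c (Or.inr (Or.inl rfl)) (Or.inl h) (Or.inr (Or.inr rfl)) (Or.inr (Or.inl rfl)))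
    have hbf : b ≠ f := fun h => hbc (key b c (Or.inr (Or.inl rfl)) (Or.inr (Or.inr h)) (Or.inr (Or.inr rfl)) (Or.inr (Or.inl rfl)))
    exact cl_pair_eq_of_cert (mk5 a b c d f) (mk5_inj hab hac had haf hbc hbd hbf hde.symm hef hdf) ⟨0,1,2⟩ ⟨3,2,4⟩ famII (by simp [famII]) (by decide)
  by_cases haf : a = f
  · -- a = f : family III
    subst haf
    have hbd : b ≠ d := fun h => (Ne.symm hab) (key b a (Or.inr (Or.inl rfl)) (Or.inl h) (Or.inl rfl) (Or.inr (Or.inr rfl)))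
    have hbe : b ≠ e := fun h => (Ne.symm hab) (key b a (Or.inr (Or.inl rfl)) (Or.inr (Or.inl h)) (Or.inl rfl) (Or.inr (Or.inr rfl)))
    have hcd : c ≠ d := fun h => (Ne.symm hac) (key c a (Or.inr (Or.inr rfl)) (Or.inl h) (Or.inl rfl) (Or.inr (Or.inr rfl)))
    have hce : c ≠ e := fun h => (Ne.symm hac) (key c a (Or.inr (Or.inr rfl)) (Or.inr (Or.inl h)) (Or.inl rfl) (Or.inr (Or.inr rfl)))
    exact cl_pair_eq_of_cert (mk5 a b c d e) (mk5_inj hab hac hdf.symm hef.symm hbc hbd hbe hcd hce hde) ⟨0,1,2⟩ ⟨3,4,0⟩ famIII (by simp [famIII]) (by decide)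
  by_cases hbf : b = f
  · -- b = f : family III (p swapped)
    subst hbf
    have had : a ≠ d := fun h => hab (key a b (Or.inl rfl) (Or.inl h) (Or.inr (Or.inl rfl)) (Or.inr (Or.inr rfl)))
    have hae : a ≠ e := fun h => hab (key a b (Or.inl rfl) (Or.inr (Or.inl h)) (Or.inr (Or.inl rfl)) (Or.inr (Or.inr rfl)))
    have hcd : c ≠ d := fun h => (Ne.symm hbc) (key c b (Or.inr (Or.inr rfl)) (Or.inl h) (Or.inr (Or.inl rfl)) (Or.inr (Or.inr rfl)))
    have hce : c ≠ e := fun h => (Ne.symm hbc) (key c b (Or.inr (Or.inr rfl)) (Or.inr (Or.inl h)) (Or.inr (Or.inl rfl)) (Or.inr (Or.inr rfl)))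
    exact cl_pair_eq_of_cert (mk5 b a c d e) (mk5_inj hab.symm hbc hdf.symm hef.symm hac had hae hcd hce hde) ⟨1,0,2⟩ ⟨3,4,0⟩ famIII (by simp [famIII]) (by decide)
  by_cases had : a = d
  · -- a = d : family IV
    subst had
    have hbe : b ≠ e := fun h => (Ne.symm hab) (key b a (Or.inr (Or.inl rfl)) (Or.inr (Or.inl h)) (Or.inl rfl) (Or.inl rfl))
    have hbf : b ≠ f := fun h => (Ne.symm hab) (key b a (Or.inr (Or.inl rfl)) (Or.inr (Or.inr h)) (Or.inl rfl) (Or.inl rfl))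
    have hce : c ≠ e := fun h => (Ne.symm hac) (key c a (Or.inr (Or.inr rfl)) (Or.inr (Or.inl h)) (Or.inl rfl) (Or.inl rfl))
    have hcf : c ≠ f := fun h => (Ne.symm hac) (key c a (Or.inr (Or.inr rfl)) (Or.inr (Or.inr h)) (Or.inl rfl) (Or.inl rfl))
    exact cl_pair_eq_of_cert (mk5 a b c e f) (mk5_inj hab hac hde hdf hbc hbe hbf hce hcf hef) ⟨0,1,2⟩ ⟨0,3,4⟩ famIV (by simp [famIV]) (by decide)
  by_cases hbd : b = d
  · -- b = d : family IV (p swapped)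
    subst hbd
    have hae : a ≠ e := fun h => hab (key a b (Or.inl rfl) (Or.inr (Or.inl h)) (Or.inr (Or.inl rfl)) (Or.inl rfl))
    have haf : a ≠ f := fun h => hab (key a b (Or.inl rfl) (Or.inr (Or.inr h)) (Or.inr (Or.inl rfl)) (Or.inl rfl))
    have hce : c ≠ e := fun h => (Ne.symm hbc) (key c b (Or.inr (Or.inr rfl)) (Or.inr (Or.inl h)) (Or.inr (Or.inl rfl)) (Or.inl rfl))
    have hcf : c ≠ f := fun h => (Ne.symm hbc) (key c b (Or.inr (Or.inr rfl)) (Or.inr (Or.inr h)) (Or.inr (Or.inl rfl)) (Or.inl rfl))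
    exact cl_pair_eq_of_cert (mk5 b a c e f) (mk5_inj hab.symm hbc hde hdf hac hae haf hce hcf hef) ⟨1,0,2⟩ ⟨0,3,4⟩ famIV (by simp [famIV]) (by decide)
  by_cases hae : a = e
  · -- a = e : family IV (q middle)
    subst hae
    have hbd : b ≠ d := fun h => (Ne.symm hab) (key b a (Or.inr (Or.inl rfl)) (Or.inl h) (Or.inl rfl) (Or.inr (Or.inl rfl)))
    have hbf : b ≠ f := fun h => (Ne.symm hab) (key b a (Or.inr (Or.inl rfl)) (Or.inr (Or.inr h)) (Or.inl rfl) (Or.inr (Or.inl rfl)))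
    have hcd : c ≠ d := fun h => (Ne.symm hac) (key c a (Or.inr (Or.inr rfl)) (Or.inl h) (Or.inl rfl) (Or.inr (Or.inl rfl)))
    have hcf : c ≠ f := fun h => (Ne.symm hac) (key c a (Or.inr (Or.inr rfl)) (Or.inr (Or.inr h)) (Or.inl rfl) (Or.inr (Or.inl rfl)))
    exact cl_pair_eq_of_cert (mk5 a b c d f) (mk5_inj hab hac hde.symm haf hbc hbd hbf hcd hcf hdf) ⟨0,1,2⟩ ⟨3,0,4⟩ famIV (by simp [famIV]) (by decide)
  by_cases hbe : b = e
  · -- b = e : family IV (p swapped, q middle)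
    subst hbe
    have had : a ≠ d := fun h => hab (key a b (Or.inl rfl) (Or.inl h) (Or.inr (Or.inl rfl)) (Or.inr (Or.inl rfl)))
    have haf : a ≠ f := fun h => hab (key a b (Or.inl rfl) (Or.inr (Or.inr h)) (Or.inr (Or.inl rfl)) (Or.inr (Or.inl rfl)))
    have hcd : c ≠ d := fun h => (Ne.symm hbc) (key c b (Or.inr (Or.inr rfl)) (Or.inl h) (Or.inr (Or.inl rfl)) (Or.inr (Or.inl rfl)))
    have hcf : c ≠ f := fun h => (Ne.symm hbc) (key c b (Or.inr (Or.inr rfl)) (Or.inr (Or.inr h)) (Or.inr (Or.inl rfl)) (Or.inr (Or.inl rfl)))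
    exact cl_pair_eq_of_cert (mk5 b a c d f) (mk5_inj hab.symm hbc hde.symm hef hac had haf hcd hcf hdf) ⟨1,0,2⟩ ⟨3,0,4⟩ famIV (by simp [famIV]) (by decide)
  -- disjoint : family D
  exact cl_pair_eq_of_cert (mk6 a b c d e f)
    (mk6_inj hab hac had hae haf hbc hbd hbe hbf hcd hce hcf hde hdf hef)
    ⟨0,1,2⟩ ⟨3,4,5⟩ famD (by simp [famD]) (by decide)
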